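/- arXiv:math/9803017 — 4 statements merged into one kernel-verified Lean document; each statement's English description precedes it below -/
import Mathlib

section
/- The Kronecker–Eisenstein series f(z₁,z₂;τ) = Σ_{(α(z₁)+m)(α(z₂)+n)>0} sign(α(z₁)+m)·e(τmn + nz₁ + mz₂), where α(z) = Im(z)/Im(τ) and the sum is over integers m, n with (α(z₁)+m) and (α(z₂)+n) of the same sign, converges absolutely whenever α(z₁) ∉ ℤ and α(z₂) ∉ ℤ. -/
open Complex

noncomputable def e (w : ℂ) : ℂ := Complex.exp (2 * Real.pi * Complex.I * w)

noncomputable def theta (z τ : ℂ) : ℂ := ∑' n : ℤ, e (τ * n ^ 2 / 2 + n * z)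

noncomputable def thetaD (z τ : ℂ) : ℂ := deriv (fun w => theta w τ) z

noncomputable def al (τ z : ℂ) : ℝ := z.im / τ.im

noncomputable def sgn (t : ℝ) : ℂ := if 0 < t then 1 else -1

/-- term of the Kronecker-Eisenstein series, indexed by `(m, n) : ℤ × ℤ`. -/
noncomputable def fterm (τ z₁ z₂ : ℂ) (p : ℤ × ℤ) : ℂ :=
  if 0 < (al τ z₁ + p.1) * (al τ z₂ + p.2) then
    sgn (al τ z₁ + p.1) * e (τ * p.1 * p.2 + p.2 * z₁ + p.1 * z₂)
  else 0

noncomputable def fKr (z₁ z₂ τ : ℂ) : ℂ := ∑' p : ℤ × ℤ, fterm τ z₁ z₂ p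

noncomputable def kappa (y x τ : ℂ) : ℂ :=
  ∑' n : ℤ, e (τ * n ^ 2 / 2 + n * x) / (e (n * τ) - e y)

/-- term of the trapezoid series `g`, indexed by `(m, n) : ℤ × ℤ`. -/
noncomputable def gterm (τ z₁ z₂ : ℂ) (p : ℤ × ℤ) : ℂ :=
  if 0 < ((p.2 : ℝ) + al τ z₁) * ((p.1 : ℝ) + al τ z₂) then
    sgn ((p.1 : ℝ) + al τ z₂) *
      e (((p.2 : ℂ) + p.1 / 2) * p.1 * τ + p.1 * z₁ + ((p.1 : ℂ) + p.2) * z₂)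
  else 0

noncomputable def gF (z₁ z₂ τ : ℂ) : ℂ := ∑' p : ℤ × ℤ, gterm τ z₁ z₂ p

noncomputable def g0 (z₁ z₂ τ : ℂ) : ℂ :=
  ∑' m : ℤ, e (τ * m ^ 2 / 2 + m * (z₁ + z₂)) / (1 - e (m * τ + z₂))

/-- term of the series `h₀`, indexed by `(m, n) : ℤ × ℤ`. -/
noncomputable def hterm (τ x : ℂ) (p : ℤ × ℤ) : ℂ :=
  if 0 < ((p.1 : ℝ) + 1 / 2) * ((p.2 : ℝ) + 1 / 2) then
    sgn ((p.1 : ℝ) + 1 / 2) *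
      e (τ / 2 * (2 * p.1 ^ 2 + 4 * p.1 * p.2 + p.2 ^ 2) + p.2 * x)
  else 0

noncomputable def h0 (τ x : ℂ) : ℂ := ∑' p : ℤ × ℤ, hterm τ x p

def notInt (t : ℝ) : Prop := ∀ k : ℤ, t ≠ (k : ℝ)

lemma sumExpInt {a : ℝ} (ha : 0 < a) : Summable fun n : ℤ => Real.exp (-(a * |(n : ℝ)|)) := by
  have hg : Summable fun n : ℕ => (Real.exp (-a)) ^ n :=
    summable_geometric_of_lt_one (Real.exp_nonneg _)
      (by rw [Real.exp_lt_one_iff]; linarith)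
  apply Summable.of_nat_of_neg
  · refine hg.congr fun n => ?_
    rw [← Real.exp_nat_mul]
    congr 1
    simp [_root_.abs_of_nonneg (n.cast_nonneg : (0:ℝ) ≤ n)]
    ring
  · refine hg.congr fun n => ?_
    rw [← Real.exp_nat_mul]
    push_cast
    rw [abs_neg, _root_.abs_of_nonneg (n.cast_nonneg : (0:ℝ) ≤ n)]
    ring

lemma sumExpShift {a : ℝ} (t : ℝ) (ha : 0 < a) :
    Summable fun n : ℤ => Real.exp (-(a * |(n : ℝ) + t|)) := by
  refine (sumExpInt ha |>.mul_left (Real.exp (a * |t|))).of_nonneg_of_le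
    (fun n => (Real.exp_nonneg _)) fun n => ?_
  rw [← Real.exp_add]
  apply Real.exp_le_exp.mpr
  have : |(n : ℝ)| ≤ |(n : ℝ) + t| + |t| := by
    calc |(n:ℝ)| = |((n:ℝ) + t) + (-t)| := by ring_nf
    _ ≤ |(n : ℝ) + t| + |(-t)| := abs_add_le _ _
    _ = |(n : ℝ) + t| + |t| := by rw [abs_neg]
  nlinarith [abs_nonneg t, abs_nonneg ((n:ℝ)+t)]

lemma dist_int {t : ℝ} (h : notInt t) : ∃ δ > 0, ∀ m : ℤ, δ ≤ |t + m| := by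
  refine ⟨min (Int.fract t) (1 - Int.fract t), ?_, ?_⟩
  · have h1 : Int.fract t ≠ 0 := by
      intro h0
      exact h ⌊t⌋ (by have := Int.fract_add_floor t; rw [h0, zero_add] at this; exact this.symm)
    have h2 := Int.fract_nonneg t
    have h3 := Int.fract_lt_one t
    have : 0 < Int.fract t := lt_of_le_of_ne h2 (Ne.symm h1)
    exact lt_min this (by linarith)
  · intro m
    have hf : t + m = Int.fract t + (⌊t⌋ + m) := by
      have := Int.fract_add_floor t
      push_cast
      linarith
    rcases le_or_gt 0 (⌊t⌋ + m) with hk | hk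
    · have : (0:ℝ) ≤ (⌊t⌋ + m : ℤ) := by exact_mod_cast hk
      push_cast at this
      have h2 := Int.fract_nonneg t
      rw [hf, _root_.abs_of_nonneg (by linarith)]
      have := min_le_left (Int.fract t) (1 - Int.fract t)
      linarith
    · have : (⌊t⌋ + m : ℤ) ≤ -1 := by omega
      have h4 : ((⌊t⌋:ℝ) + m) ≤ -1 := by exact_mod_cast this
      have h3 := Int.fract_lt_one t
      rw [hf, abs_of_neg (by linarith)]
      have := min_le_right (Int.fract t) (1 - Int.fract t)
      linarith

theorem stmt3 (τ : ℂ) (hτ : 0 < τ.im) (z₁ z₂ : ℂ)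
    (h₁ : notInt (al τ z₁)) (h₂ : notInt (al τ z₂)) :
    Summable (fun p : ℤ × ℤ => ‖fterm τ z₁ z₂ p‖) := by
  have hτ' : τ.im ≠ 0 := ne_of_gt hτ
  obtain ⟨δ₁, hδ₁, hb₁⟩ := dist_int h₁
  obtain ⟨δ₂, hδ₂, hb₂⟩ := dist_int h₂
  set α₁ := al τ z₁ with hα₁
  set α₂ := al τ z₂ with hα₂
  set c : ℝ := 2 * Real.pi * τ.im with hc
  have hcpos : 0 < c := by positivity
  set a : ℝ := c * min δ₁ δ₂ / 2 with ha
  have hapos : 0 < a := by positivity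
  set C : ℝ := Real.exp (c * (α₁ * α₂)) with hC
  have hsum : Summable fun p : ℤ × ℤ =>
      C * (Real.exp (-(a * |(p.1:ℝ) + α₁|)) * Real.exp (-(a * |(p.2:ℝ) + α₂|))) :=
    (((sumExpShift α₁ hapos).mul_of_nonneg (sumExpShift α₂ hapos)
      (fun _ => Real.exp_nonneg _) (fun _ => Real.exp_nonneg _))).mul_left C
  apply hsum.of_nonneg_of_le (fun p => norm_nonneg _)
  rintro ⟨m, n⟩
  rw [fterm]
  split_ifs with h
  · rw [norm_mul]
    have hsgn : ‖sgn (α₁ + m)‖ = 1 := by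
      rw [sgn]; split_ifs <;> simp
    rw [hsgn, one_mul]
    rw [e, Complex.norm_exp]
    have hre : (2 * (Real.pi:ℂ) * I * (τ * m * n + n * z₁ + m * z₂)).re =
        -(c * ((m:ℝ) * n + n * α₁ + m * α₂)) := by
      have e1 : z₁.im = α₁ * τ.im := by rw [hα₁, al]; field_simp
      have e2 : z₂.im = α₂ * τ.im := by rw [hα₂, al]; field_simp
      simp [Complex.mul_re, Complex.mul_im, Complex.add_re, Complex.add_im, hc, e1, e2]
      ring
    rw [hre, hC, ← Real.exp_add, ← Real.exp_add]
    apply Real.exp_le_exp.mpr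
    set x := α₁ + (m:ℝ) with hx
    set y := α₂ + (n:ℝ) with hy
    have hxy : x * y = |x| * |y| := by
      rw [← abs_mul, _root_.abs_of_pos h]
    have hax : |(m:ℝ) + α₁| = |x| := by rw [hx, add_comm]
    have hay : |(n:ℝ) + α₂| = |y| := by rw [hy, add_comm]
    rw [hax, hay]
    have key : a * (|x| + |y|) ≤ c * (x * y) := by
      have h1 : δ₁ * |y| ≤ |x| * |y| := mul_le_mul_of_nonneg_right (hb₁ m) (abs_nonneg y)
      have h2 : |x| * δ₂ ≤ |x| * |y| := mul_le_mul_of_nonneg_left (hb₂ n) (abs_nonneg x)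
      have hm1 : min δ₁ δ₂ ≤ δ₁ := min_le_left _ _
      have hm2 : min δ₁ δ₂ ≤ δ₂ := min_le_right _ _
      have h3 : min δ₁ δ₂ * |x| ≤ δ₂ * |x| := mul_le_mul_of_nonneg_right hm2 (abs_nonneg x)
      have h4 : min δ₁ δ₂ * |y| ≤ δ₁ * |y| := mul_le_mul_of_nonneg_right hm1 (abs_nonneg y)
      have h5 : min δ₁ δ₂ * (|x| + |y|) ≤ 2 * (|x| * |y|) := by
        have h2' : δ₂ * |x| ≤ |x| * |y| := by linarith [h2, mul_comm (|x|) δ₂]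
        nlinarith
      rw [hxy, ha]
      calc c * min δ₁ δ₂ / 2 * (|x| + |y|) = (c / 2) * (min δ₁ δ₂ * (|x| + |y|)) := by ring
        _ ≤ (c / 2) * (2 * (|x| * |y|)) := by
            exact mul_le_mul_of_nonneg_left h5 (by positivity)
        _ = c * (|x| * |y|) := by ring
    have hexp : (m:ℝ) * n + n * α₁ + m * α₂ = x * y - α₁ * α₂ := by
      rw [hx, hy]; ring
    rw [hexp]
    nlinarith
  · simp only [norm_zero]
    positivity
end

section
/- The function f is symmetric in its two arguments: f(z₂, z₁; τ) = f(z₁, z₂; τ) whenever α(z₁), α(z₂) ∉ ℤ. -/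
open Complex

theorem stmt4 (τ : ℂ) (hτ : 0 < τ.im) (z₁ z₂ : ℂ)
    (h₁ : notInt (al τ z₁)) (h₂ : notInt (al τ z₂)) :
    fKr z₂ z₁ τ = fKr z₁ z₂ τ := by
  unfold fKr
  rw [← (Equiv.prodComm ℤ ℤ).tsum_eq (fterm τ z₂ z₁)]
  congr 1
  funext p
  simp only [fterm, Equiv.prodComm_apply, Prod.fst_swap, Prod.snd_swap]
  by_cases h : 0 < (al τ z₁ + p.1) * (al τ z₂ + p.2)
  · rw [if_pos h]; refine (if_pos (show 0 < (al τ z₂ + p.2) * (al τ z₁ + p.1) by nlinarith)).trans ?_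
    have hsgn : sgn (al τ z₂ + p.2) = sgn (al τ z₁ + p.1) := by
      rcases mul_pos_iff.mp h with ⟨ha, hb⟩ | ⟨ha, hb⟩
      · rw [sgn, sgn, if_pos ha, if_pos hb]
      · rw [sgn, sgn, if_neg (by linarith), if_neg (by linarith)]
    rw [hsgn]
    congr 1
    congr 1
    ring
  · rw [if_neg h]; exact if_neg (show ¬ 0 < (al τ z₂ + p.2) * (al τ z₁ + p.1) by rw [mul_comm]; exact h)
end

section
/- The function f satisfies the quasi-periodicity f(z₁ + m + nτ, z₂; τ) = e(−n z₂)·f(z₁, z₂; τ) for all integers m, n such that both sides are defined (i.e. α(z₁), α(z₁ + nτ), α(z₂) ∉ ℤ). -/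
open Complex

lemma e_add (x y : ℂ) : e (x + y) = e x * e y := by
  unfold e; rw [mul_add, Complex.exp_add]

lemma e_int_shift (x : ℂ) (k : ℤ) : e (x + k) = e x := by
  rw [e_add]
  have : e (k : ℂ) = 1 := by
    unfold e
    rw [mul_comm ((2 : ℂ) * Real.pi * Complex.I) (k : ℂ),
      Complex.exp_int_mul_two_pi_mul_I]
  rw [this, mul_one]

theorem stmt5 (τ : ℂ) (hτ : 0 < τ.im) (z₁ z₂ : ℂ) (m n : ℤ)
    (h₁ : notInt (al τ z₁)) (h₁' : notInt (al τ (z₁ + n * τ)))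
    (h₂ : notInt (al τ z₂)) :
    fKr (z₁ + m + n * τ) z₂ τ = e (-(n * z₂)) * fKr z₁ z₂ τ := by
  have hτ' : τ.im ≠ 0 := ne_of_gt hτ
  have hal : al τ (z₁ + m + n * τ) = al τ z₁ + n := by
    simp only [al, Complex.add_im, Complex.mul_im, Complex.intCast_im,
      Complex.intCast_re]
    field_simp
    ring
  have key : ∀ p : ℤ × ℤ, fterm τ (z₁ + m + n * τ) z₂ p
      = e (-(n * z₂)) * fterm τ z₁ z₂ (p.1 + n, p.2) := by
    rintro ⟨a, b⟩
    have hc : al τ (z₁ + m + n * τ) + (a : ℝ) = al τ z₁ + ((a + n : ℤ) : ℝ) := by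
      rw [hal]; push_cast; ring
    simp only [fterm, hc]
    split_ifs with h
    · have hE : e (τ * (a : ℂ) * (b : ℂ) + (b : ℂ) * (z₁ + m + n * τ) + (a : ℂ) * z₂)
          = e (-(n * z₂)) * e (τ * ((a + n : ℤ) : ℂ) * (b : ℂ) + (b : ℂ) * z₁
            + ((a + n : ℤ) : ℂ) * z₂) := by
        rw [← e_add]
        have h2 : τ * (a : ℂ) * (b : ℂ) + (b : ℂ) * (z₁ + m + n * τ) + (a : ℂ) * z₂
            = (-(n * z₂) + (τ * ((a + n : ℤ) : ℂ) * (b : ℂ) + (b : ℂ) * z₁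
              + ((a + n : ℤ) : ℂ) * z₂)) + ((m * b : ℤ) : ℂ) := by
          push_cast; ring
        rw [h2, e_int_shift]
      rw [hE]; ring
    · rw [mul_zero]
  calc fKr (z₁ + m + n * τ) z₂ τ
      = ∑' p : ℤ × ℤ, e (-(n * z₂)) * fterm τ z₁ z₂ (p.1 + n, p.2) := tsum_congr key
    _ = e (-(n * z₂)) * ∑' p : ℤ × ℤ, fterm τ z₁ z₂ (p.1 + n, p.2) := tsum_mul_left
    _ = e (-(n * z₂)) * fKr z₁ z₂ τ := by
        congr 1
        exact ((Equiv.prodCongr (Equiv.addRight n) (Equiv.refl ℤ)).tsum_eq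
          (fterm τ z₁ z₂))
end

section
/- The function g satisfies the quasi-periodicity g(z₁, z₂ + m + nτ; τ) = e(−n²τ/2 − n(z₁ + z₂))·g(z₁, z₂; τ) for integers m, n, whenever all arguments lie in the domain of definition (α(z₁) ∉ ℤ, α(z₂) ∉ ℤ, α(z₂ + nτ) ∉ ℤ). -/
open Complex

lemma e_int (k : ℤ) : e (k : ℂ) = 1 := by
  rw [e, show 2 * (Real.pi : ℂ) * Complex.I * k = k * (2 * Real.pi * Complex.I) by ring]
  exact Complex.exp_int_mul_two_pi_mul_I k

lemma al_shift (τ : ℂ) (hτ : τ.im ≠ 0) (z : ℂ) (m n : ℤ) :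
    al τ (z + m + n * τ) = al τ z + n := by
  simp only [al, Complex.add_im, Complex.mul_im, Complex.intCast_im, Complex.intCast_re]
  field_simp
  ring

theorem stmt14 (τ : ℂ) (hτ : 0 < τ.im) (z₁ z₂ : ℂ) (m n : ℤ)
    (h₁ : notInt (al τ z₁)) (h₂ : notInt (al τ z₂))
    (h₂' : notInt (al τ (z₂ + n * τ))) :
    gF z₁ (z₂ + m + n * τ) τ =
      e (-(n ^ 2 * τ / 2) - n * (z₁ + z₂)) * gF z₁ z₂ τ := by
  have him : τ.im ≠ 0 := ne_of_gt hτ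
  have key : ∀ p : ℤ × ℤ, gterm τ z₁ (z₂ + m + n * τ) p =
      e (-(n ^ 2 * τ / 2) - n * (z₁ + z₂)) * gterm τ z₁ z₂ (p.1 + n, p.2) := by
    rintro ⟨a, b⟩
    simp only [gterm, al_shift τ him z₂ m n]
    have hc : ((b : ℝ) + al τ z₁) * ((a : ℝ) + (al τ z₂ + n)) =
        ((b : ℝ) + al τ z₁) * (((a + n : ℤ) : ℝ) + al τ z₂) := by push_cast; ring
    have hs : ((a : ℝ) + (al τ z₂ + n)) = ((a + n : ℤ) : ℝ) + al τ z₂ := by push_cast; ring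
    rw [hc, hs]
    split_ifs with h
    · have hexp : (((b : ℂ) + a / 2) * a * τ + a * z₁ + ((a : ℂ) + b) * (z₂ + m + n * τ))
          = (-(n ^ 2 * τ / 2) - n * (z₁ + z₂)) +
            (((b : ℂ) + ((a + n : ℤ) : ℂ) / 2) * ((a + n : ℤ) : ℂ) * τ +
              ((a + n : ℤ) : ℂ) * z₁ + (((a + n : ℤ) : ℂ) + b) * z₂) +
            (((a + b) * m : ℤ) : ℂ) := by push_cast; ring
      rw [hexp, e_add, e_add, e_int, mul_one]
      ring
    · rw [mul_zero]
  rw [gF, tsum_congr key, tsum_mul_left]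
  congr 1
  rw [gF]
  exact ((Equiv.addRight n).prodCongr (Equiv.refl ℤ)).tsum_eq (gterm τ z₁ z₂)
end
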